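/- Let G be a connected simple graph of order n with diam(G) = 2 and β(G) = n − 3, with twin graph G*. Assume that for every vertex w of G with Γ_2^*(w^*) ≠ ∅, the set Γ_1(w) is not homogeneous, and let v be a fixed vertex with Γ_2^*(v^*) ≠ ∅ (so Γ_2(v) is homogeneous). If for every vertex u ∈ R_2(v) the set M_2(u) is empty and R_1(v) is homogeneous, then G* satisfies the structure G_2. Structure G_2: G* ≅ P_3 and either (a) the degree-2 vertex is of type (N), one leaf is of type (K) and the other leaf is of any type, or (b) one leaf is of type (K), the other leaf is of type (KN), and the degree-2 vertex is of any type. -/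

import Mathlib

namespace PaperMetricDim

open SimpleGraph

variable {V : Type*}

/-- A set `W` of vertices resolves the graph `G`: any two distinct vertices have
different distance to some vertex of `W`. -/
def Resolves (G : SimpleGraph V) (W : Set V) : Prop :=
  ∀ u v : V, u ≠ v → ∃ w ∈ W, G.dist u w ≠ G.dist v w

/-- The metric dimension of `G`: the minimum cardinality of a resolving set. -/
noncomputable def metricDim (G : SimpleGraph V) : ℕ :=
  sInf {k : ℕ | ∃ W : Set V, Resolves G W ∧ W.ncard = k}

/-- `G` is connected and has diameter exactly `d`. -/
def diamEq (G : SimpleGraph V) (d : ℕ) : Prop :=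
  G.Connected ∧ (∀ u v : V, G.dist u v ≤ d) ∧ ∃ u v : V, G.dist u v = d

/-- A set of vertices is homogeneous if it induces a complete or an empty subgraph. -/
def Homogeneous (G : SimpleGraph V) (S : Set V) : Prop :=
  (∀ a ∈ S, ∀ b ∈ S, a ≠ b → G.Adj a b) ∨ (∀ a ∈ S, ∀ b ∈ S, ¬ G.Adj a b)

/-- Two distinct vertices are twins: they have the same neighbours apart from
each other. -/
def Twins (G : SimpleGraph V) (u v : V) : Prop :=
  u ≠ v ∧ G.neighborSet u \ {v} = G.neighborSet v \ {u}

/-- The twin equivalence relation: equal or twins. -/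
def twinRel (G : SimpleGraph V) (u v : V) : Prop := u = v ∨ Twins G u v

/-- The twin class of a vertex. -/
def twinClass (G : SimpleGraph V) (v : V) : Set V := {u : V | twinRel G v u}

/-- The vertices of the twin graph: twin equivalence classes. -/
def TwinVertex (G : SimpleGraph V) : Type _ := {S : Set V // ∃ v : V, S = twinClass G v}

/-- The twin graph `G*` of `G`: twin classes, two distinct classes being
adjacent iff (some, equivalently all) representatives are adjacent in `G`. -/
def twinGraph (G : SimpleGraph V) : SimpleGraph (TwinVertex G) where
  Adj A B := A ≠ B ∧ ∃ a ∈ A.1, ∃ b ∈ B.1, G.Adj a b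
  symm := ⟨by
    rintro A B ⟨hne, a, ha, b, hb, hab⟩
    exact ⟨hne.symm, b, hb, a, ha, hab.symm⟩⟩
  loopless := ⟨by rintro A ⟨hne, -⟩; exact hne rfl⟩

/-- The twin class of `v`, as a vertex of the twin graph. -/
def cls (G : SimpleGraph V) (v : V) : TwinVertex G := ⟨twinClass G v, v, rfl⟩

/-- A twin-graph vertex of type (1): a singleton class. -/
def typeOne (G : SimpleGraph V) (A : TwinVertex G) : Prop := ∃ v : V, A.1 = {v}

/-- A twin-graph vertex of type (K): a class with at least two vertices inducing
a complete subgraph. -/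
def typeK (G : SimpleGraph V) (A : TwinVertex G) : Prop :=
  A.1.Nontrivial ∧ ∀ a ∈ A.1, ∀ b ∈ A.1, a ≠ b → G.Adj a b

/-- A twin-graph vertex of type (N): a class with at least two vertices inducing
an empty subgraph. -/
def typeN (G : SimpleGraph V) (A : TwinVertex G) : Prop :=
  A.1.Nontrivial ∧ ∀ a ∈ A.1, ∀ b ∈ A.1, ¬ G.Adj a b

/-- Type (1K): type (1) or type (K). -/
def type1K (G : SimpleGraph V) (A : TwinVertex G) : Prop := typeOne G A ∨ typeK G A

/-- Type (1N): type (1) or type (N). -/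
def type1N (G : SimpleGraph V) (A : TwinVertex G) : Prop := typeOne G A ∨ typeN G A

/-- Type (KN): type (K) or type (N). -/
def typeKN (G : SimpleGraph V) (A : TwinVertex G) : Prop := typeK G A ∨ typeN G A

/-- `Γ_i(v)`: the set of vertices at distance `i` from `v`. -/
def Gamma (G : SimpleGraph V) (i : ℕ) (v : V) : Set V := {u : V | G.dist u v = i}

/-- `Γ_i^*(v^*)`: the set of twin-graph vertices at distance `i` from `v^*`. -/
def GammaStar (G : SimpleGraph V) (i : ℕ) (v : V) : Set (TwinVertex G) :=
  {A : TwinVertex G | (twinGraph G).dist A (cls G v) = i}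

/-- `R_1(v)`: neighbours of `v` having a neighbour at distance 2 from `v`. -/
def R1 (G : SimpleGraph V) (v : V) : Set V :=
  {x ∈ Gamma G 1 v | ∃ y ∈ Gamma G 2 v, G.Adj x y}

/-- `R_2(v) = Γ_1(v) \ R_1(v)`. -/
def R2 (G : SimpleGraph V) (v : V) : Set V := Gamma G 1 v \ R1 G v

/-- `R_1^*(v^*)`: twin-graph neighbours of `v^*` having a neighbour in `Γ_2^*(v^*)`. -/
def R1Star (G : SimpleGraph V) (v : V) : Set (TwinVertex G) :=
  {A ∈ GammaStar G 1 v | ∃ B ∈ GammaStar G 2 v, (twinGraph G).Adj A B}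

/-- `R_2^*(v^*) = Γ_1^*(v^*) \ R_1^*(v^*)`. -/
def R2Star (G : SimpleGraph V) (v : V) : Set (TwinVertex G) :=
  GammaStar G 1 v \ R1Star G v

/-- `M_1(x) = Γ_1(v) ∩ Γ_1(x)` (for `x ∈ Γ_1(v)`). -/
def M1 (G : SimpleGraph V) (v x : V) : Set V := Gamma G 1 v ∩ Gamma G 1 x

/-- `M_2(x) = Γ_1(v) ∩ Γ_2(x)` (for `x ∈ Γ_1(v)`). -/
def M2 (G : SimpleGraph V) (v x : V) : Set V := Gamma G 1 v ∩ Gamma G 2 x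

/-- Structure `G_1`: the twin graph is `K_3` and has at most one vertex of type (1K). -/
def structG1 (G : SimpleGraph V) : Prop :=
  ∃ a b c : TwinVertex G, a ≠ b ∧ a ≠ c ∧ b ≠ c ∧
    (∀ X : TwinVertex G, X = a ∨ X = b ∨ X = c) ∧
    (twinGraph G).Adj a b ∧ (twinGraph G).Adj a c ∧ (twinGraph G).Adj b c ∧
    (∀ X Y : TwinVertex G, type1K G X → type1K G Y → X = Y)

/-- Structure `G_2`: the twin graph is the path `P_3` with (a) centre of type (N)
and some leaf of type (K), or (b) one leaf of type (K) and the other of type (KN). -/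
def structG2 (G : SimpleGraph V) : Prop :=
  ∃ a b c : TwinVertex G, a ≠ b ∧ a ≠ c ∧ b ≠ c ∧
    (∀ X : TwinVertex G, X = a ∨ X = b ∨ X = c) ∧
    (twinGraph G).Adj a b ∧ (twinGraph G).Adj b c ∧ ¬ (twinGraph G).Adj a c ∧
    ((typeN G b ∧ (typeK G a ∨ typeK G c)) ∨
     (typeK G a ∧ typeKN G c) ∨ (typeK G c ∧ typeKN G a))

/-- Structure `G_3`: the twin graph is the paw, the triangle being `u, p, q` with
the pendant vertex `l` attached to `u`; `p` is of type (N), `q` of type (1K),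
`l` of type (1N); and if `q` is of type (K) then neither `l` nor `u` is of type (N). -/
def structG3 (G : SimpleGraph V) : Prop :=
  ∃ u p q l : TwinVertex G,
    u ≠ p ∧ u ≠ q ∧ u ≠ l ∧ p ≠ q ∧ p ≠ l ∧ q ≠ l ∧
    (∀ X : TwinVertex G, X = u ∨ X = p ∨ X = q ∨ X = l) ∧
    (twinGraph G).Adj u p ∧ (twinGraph G).Adj u q ∧ (twinGraph G).Adj p q ∧
    (twinGraph G).Adj u l ∧ ¬ (twinGraph G).Adj p l ∧ ¬ (twinGraph G).Adj q l ∧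
    typeN G p ∧ type1K G q ∧ type1N G l ∧
    (typeK G q → ¬ typeN G l ∧ ¬ typeN G u)

/-- Structure `G_4`: the twin graph is the cycle `C_5` and every vertex is of type (1). -/
def structG4 (G : SimpleGraph V) : Prop :=
  ∃ v0 v1 v2 v3 v4 : TwinVertex G,
    v0 ≠ v1 ∧ v0 ≠ v2 ∧ v0 ≠ v3 ∧ v0 ≠ v4 ∧ v1 ≠ v2 ∧ v1 ≠ v3 ∧ v1 ≠ v4 ∧
    v2 ≠ v3 ∧ v2 ≠ v4 ∧ v3 ≠ v4 ∧
    (∀ X : TwinVertex G, X = v0 ∨ X = v1 ∨ X = v2 ∨ X = v3 ∨ X = v4) ∧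
    (twinGraph G).Adj v0 v1 ∧ (twinGraph G).Adj v1 v2 ∧ (twinGraph G).Adj v2 v3 ∧
    (twinGraph G).Adj v3 v4 ∧ (twinGraph G).Adj v4 v0 ∧
    ¬ (twinGraph G).Adj v0 v2 ∧ ¬ (twinGraph G).Adj v1 v3 ∧ ¬ (twinGraph G).Adj v2 v4 ∧
    ¬ (twinGraph G).Adj v3 v0 ∧ ¬ (twinGraph G).Adj v4 v1 ∧
    (∀ X : TwinVertex G, typeOne G X)

/-- Structure `G_5`: the twin graph is `C_5` with one chord (cycle `v0 v1 v2 v3 v4`,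
chord `v0 v2`); the two adjacent degree-2 vertices `v3, v4` are of type (1), the
other vertices of type (1K). -/
def structG5 (G : SimpleGraph V) : Prop :=
  ∃ v0 v1 v2 v3 v4 : TwinVertex G,
    v0 ≠ v1 ∧ v0 ≠ v2 ∧ v0 ≠ v3 ∧ v0 ≠ v4 ∧ v1 ≠ v2 ∧ v1 ≠ v3 ∧ v1 ≠ v4 ∧
    v2 ≠ v3 ∧ v2 ≠ v4 ∧ v3 ≠ v4 ∧
    (∀ X : TwinVertex G, X = v0 ∨ X = v1 ∨ X = v2 ∨ X = v3 ∨ X = v4) ∧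
    (twinGraph G).Adj v0 v1 ∧ (twinGraph G).Adj v1 v2 ∧ (twinGraph G).Adj v2 v3 ∧
    (twinGraph G).Adj v3 v4 ∧ (twinGraph G).Adj v4 v0 ∧ (twinGraph G).Adj v0 v2 ∧
    ¬ (twinGraph G).Adj v1 v3 ∧ ¬ (twinGraph G).Adj v1 v4 ∧ ¬ (twinGraph G).Adj v2 v4 ∧
    typeOne G v3 ∧ typeOne G v4 ∧ type1K G v0 ∧ type1K G v1 ∧ type1K G v2

/-- Structure `G_6`: the twin graph is `C_5` with two adjacent chords (cycle
`v0 v1 v2 v3 v4`, chords `v0 v2` and `v0 v3`, so `v0` has degree 4); `v0` is of any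
type, the other vertices of type (1K); no two non-adjacent vertices are both of
type (K), and no two adjacent vertices have the different types (K) and (N). -/
def structG6 (G : SimpleGraph V) : Prop :=
  ∃ v0 v1 v2 v3 v4 : TwinVertex G,
    v0 ≠ v1 ∧ v0 ≠ v2 ∧ v0 ≠ v3 ∧ v0 ≠ v4 ∧ v1 ≠ v2 ∧ v1 ≠ v3 ∧ v1 ≠ v4 ∧
    v2 ≠ v3 ∧ v2 ≠ v4 ∧ v3 ≠ v4 ∧
    (∀ X : TwinVertex G, X = v0 ∨ X = v1 ∨ X = v2 ∨ X = v3 ∨ X = v4) ∧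
    (twinGraph G).Adj v0 v1 ∧ (twinGraph G).Adj v1 v2 ∧ (twinGraph G).Adj v2 v3 ∧
    (twinGraph G).Adj v3 v4 ∧ (twinGraph G).Adj v4 v0 ∧ (twinGraph G).Adj v0 v2 ∧
    (twinGraph G).Adj v0 v3 ∧
    ¬ (twinGraph G).Adj v1 v3 ∧ ¬ (twinGraph G).Adj v1 v4 ∧ ¬ (twinGraph G).Adj v2 v4 ∧
    type1K G v1 ∧ type1K G v2 ∧ type1K G v3 ∧ type1K G v4 ∧
    (∀ X Y : TwinVertex G, X ≠ Y → ¬ (twinGraph G).Adj X Y →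
      ¬ (typeK G X ∧ typeK G Y)) ∧
    (∀ X Y : TwinVertex G, (twinGraph G).Adj X Y → ¬ (typeK G X ∧ typeN G Y))

/-- Structure `G_7`: the twin graph is the kite (`K_4` minus an edge, vertices
`a, b` of degree 3 in the kite and `c, d` the non-adjacent pair) with a pendant
vertex `l` attached to the degree-3 vertex `a`; `l` is of type (1), `a` and `b`
are of type (1K), one of `c, d` is of type (K) and the other of type (1). -/
def structG7 (G : SimpleGraph V) : Prop :=
  ∃ a b c d l : TwinVertex G,
    a ≠ b ∧ a ≠ c ∧ a ≠ d ∧ a ≠ l ∧ b ≠ c ∧ b ≠ d ∧ b ≠ l ∧ c ≠ d ∧ c ≠ l ∧ d ≠ l ∧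
    (∀ X : TwinVertex G, X = a ∨ X = b ∨ X = c ∨ X = d ∨ X = l) ∧
    (twinGraph G).Adj a b ∧ (twinGraph G).Adj a c ∧ (twinGraph G).Adj a d ∧
    (twinGraph G).Adj b c ∧ (twinGraph G).Adj b d ∧ (twinGraph G).Adj a l ∧
    ¬ (twinGraph G).Adj c d ∧ ¬ (twinGraph G).Adj b l ∧ ¬ (twinGraph G).Adj c l ∧
    ¬ (twinGraph G).Adj d l ∧
    typeOne G l ∧ type1K G a ∧ type1K G b ∧ typeK G c ∧ typeOne G d

/-- Structure `G_8`: the twin graph is the kite (`K_4` minus an edge, `a, b` of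
degree 3 and `c, d` the non-adjacent degree-2 pair); one degree-2 vertex `c` is of
type (K) and the other `d` of type (1); one degree-3 vertex `a` is of type (N)
and the other `b` of type (1K). -/
def structG8 (G : SimpleGraph V) : Prop :=
  ∃ a b c d : TwinVertex G,
    a ≠ b ∧ a ≠ c ∧ a ≠ d ∧ b ≠ c ∧ b ≠ d ∧ c ≠ d ∧
    (∀ X : TwinVertex G, X = a ∨ X = b ∨ X = c ∨ X = d) ∧
    (twinGraph G).Adj a b ∧ (twinGraph G).Adj a c ∧ (twinGraph G).Adj a d ∧
    (twinGraph G).Adj b c ∧ (twinGraph G).Adj b d ∧ ¬ (twinGraph G).Adj c d ∧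
    typeN G a ∧ type1K G b ∧ typeK G c ∧ typeOne G d

/-- Structure `G_9`: the twin graph is `C_4`, two adjacent vertices of type (K)
and the other two of type (1). -/
def structG9 (G : SimpleGraph V) : Prop :=
  ∃ v0 v1 v2 v3 : TwinVertex G,
    v0 ≠ v1 ∧ v0 ≠ v2 ∧ v0 ≠ v3 ∧ v1 ≠ v2 ∧ v1 ≠ v3 ∧ v2 ≠ v3 ∧
    (∀ X : TwinVertex G, X = v0 ∨ X = v1 ∨ X = v2 ∨ X = v3) ∧
    (twinGraph G).Adj v0 v1 ∧ (twinGraph G).Adj v1 v2 ∧ (twinGraph G).Adj v2 v3 ∧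
    (twinGraph G).Adj v3 v0 ∧ ¬ (twinGraph G).Adj v0 v2 ∧ ¬ (twinGraph G).Adj v1 v3 ∧
    typeK G v0 ∧ typeK G v1 ∧ typeOne G v2 ∧ typeOne G v3

/-- Structure `G_10`: the twin graph is the wheel `C_4 ∨ K_1` (hub `h`, rim
`v0 v1 v2 v3`); two adjacent rim (degree-3) vertices `v0, v1` are of type (K), the
hub is of type (1K), and the other vertices of type (1). -/
def structG10 (G : SimpleGraph V) : Prop :=
  ∃ h v0 v1 v2 v3 : TwinVertex G,
    h ≠ v0 ∧ h ≠ v1 ∧ h ≠ v2 ∧ h ≠ v3 ∧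
    v0 ≠ v1 ∧ v0 ≠ v2 ∧ v0 ≠ v3 ∧ v1 ≠ v2 ∧ v1 ≠ v3 ∧ v2 ≠ v3 ∧
    (∀ X : TwinVertex G, X = h ∨ X = v0 ∨ X = v1 ∨ X = v2 ∨ X = v3) ∧
    (twinGraph G).Adj h v0 ∧ (twinGraph G).Adj h v1 ∧ (twinGraph G).Adj h v2 ∧
    (twinGraph G).Adj h v3 ∧
    (twinGraph G).Adj v0 v1 ∧ (twinGraph G).Adj v1 v2 ∧ (twinGraph G).Adj v2 v3 ∧
    (twinGraph G).Adj v3 v0 ∧ ¬ (twinGraph G).Adj v0 v2 ∧ ¬ (twinGraph G).Adj v1 v3 ∧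
    typeK G v0 ∧ typeK G v1 ∧ type1K G h ∧ typeOne G v2 ∧ typeOne G v3

/-! Write `A = {v} ∪ R₂(v)`, `B = R₁(v)` and `C = Γ₂(v)`. As `M₂(u) = ∅`, every `u ∈ R₂(v)`
is adjacent to all of `Γ₁(v)`; hence a non-edge of `Γ₁(v)` lies in `R₁(v)`, which is therefore
independent, and an edge of `Γ₁(v)` meets `R₂(v)`. If the pairs of four vertices are all
resolved by the remaining vertices, those remaining `n - 4` vertices resolve `G`; since
`β(G) = n - 3` this cannot happen, which forces `Γ₂(v)` to be homogeneous and every vertex of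
`R₁(v)` to be adjacent to every vertex of `Γ₂(v)`. So `G` is the path `A – B – C` with `A`
blown up to a clique, `B` to an independent set and `C` to a homogeneous set, and these three
sets are exactly the twin classes. -/

section

variable {G : SimpleGraph V}

theorem dist_eq_two_of_not_adj (hc : G.Connected) (hd : ∀ a b, G.dist a b ≤ 2) {a b : V}
    (hne : a ≠ b) (hnadj : ¬ G.Adj a b) : G.dist a b = 2 := by
  have h0 : G.dist a b ≠ 0 := fun h => hne (hc.dist_eq_zero_iff.mp h)
  have h1 : G.dist a b ≠ 1 := fun h => hnadj (dist_eq_one_iff_adj.mp h)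
  have := hd a b
  omega

theorem exists_adj_adj_of_dist_eq_two {y v : V} (h : G.dist y v = 2) :
    ∃ x, G.Adj y x ∧ G.Adj x v := by
  have hr : G.Reachable y v := Reachable.of_dist_ne_zero (by omega)
  have hedist : G.edist y v = 2 := by rw [← hr.coe_dist_eq_edist, h]; rfl
  obtain ⟨x, hx⟩ := (edist_eq_two_iff.mp hedist).2.2
  exact ⟨x, (G.mem_commonNeighbors.mp hx).1, (G.mem_commonNeighbors.mp hx).2.symm⟩

theorem mem_Gamma {i : ℕ} {v t : V} : t ∈ Gamma G i v ↔ G.dist t v = i := Iff.rfl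

theorem mem_Gamma_one {v t : V} : t ∈ Gamma G 1 v ↔ G.Adj t v := dist_eq_one_iff_adj

theorem mem_Gamma_two (hc : G.Connected) (hd : ∀ a b, G.dist a b ≤ 2) {v t : V} :
    t ∈ Gamma G 2 v ↔ t ≠ v ∧ ¬ G.Adj t v := by
  refine ⟨fun h => ⟨?_, fun hadj => ?_⟩, fun h => dist_eq_two_of_not_adj hc hd h.1 h.2⟩
  · rintro rfl
    simp [mem_Gamma] at h
  · rw [mem_Gamma, dist_eq_one_iff_adj.mpr hadj] at h
    omega

theorem ne_of_mem_Gamma {i j : ℕ} {v s t : V} (hs : s ∈ Gamma G i v) (ht : t ∈ Gamma G j v)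
    (hij : i ≠ j) : s ≠ t := by
  rintro rfl
  exact hij (hs.symm.trans ht)

theorem metricDim_le_ncard {W : Set V} (hW : Resolves G W) : metricDim G ≤ W.ncard :=
  Nat.sInf_le ⟨W, hW, rfl⟩

theorem resolves_compl (hc : G.Connected) {D : Set V}
    (hD : ∀ a ∈ D, ∀ b ∈ D, a ≠ b → ∃ w ∉ D, G.dist a w ≠ G.dist b w) : Resolves G Dᶜ := by
  intro a b hab
  by_cases ha : a ∈ D
  · by_cases hb : b ∈ D
    · exact hD a ha b hb hab
    · refine ⟨b, hb, ?_⟩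
      rw [dist_self]
      exact fun h => hab (hc.dist_eq_zero_iff.mp h)
  · refine ⟨a, ha, ?_⟩
    rw [dist_self]
    exact fun h => hab (hc.dist_eq_zero_iff.mp h.symm).symm

theorem metricDim_add_ncard_le [Fintype V] (hc : G.Connected) {D : Set V}
    (hD : ∀ a ∈ D, ∀ b ∈ D, a ≠ b → ∃ w ∉ D, G.dist a w ≠ G.dist b w) :
    metricDim G + D.ncard ≤ Fintype.card V := by
  have hle := metricDim_le_ncard (resolves_compl hc hD)
  have hcard := Set.ncard_add_ncard_compl D
  rw [Nat.card_eq_fintype_card] at hcard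
  omega

theorem metricDim_add_four_le [Fintype V] (hc : G.Connected) {a b c d : V}
    (hab : ∃ w ∉ ({a, b, c, d} : Set V), G.dist a w ≠ G.dist b w)
    (hcd : ∃ w ∉ ({a, b, c, d} : Set V), G.dist c w ≠ G.dist d w)
    (hcross : ∃ w, G.dist a w = G.dist b w ∧ G.dist c w = G.dist d w ∧
      G.dist a w ≠ G.dist c w) :
    metricDim G + 4 ≤ Fintype.card V := by
  obtain ⟨w₁, hw₁, h₁⟩ := hab
  obtain ⟨w₂, hw₂, h₂⟩ := hcd
  obtain ⟨w, hwa, hwc, hac⟩ := hcross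
  have hne : ∀ {x y : V} (u : V), G.dist x u ≠ G.dist y u → x ≠ y := by
    rintro x y u h rfl
    exact h rfl
  have hab' := hne w₁ h₁
  have hcd' := hne w₂ h₂
  -- a vertex of `{a, b, c, d}` would be at distance `0` from two distinct vertices
  have hw : w ∉ ({a, b, c, d} : Set V) := by
    have hzero : ∀ {x}, G.dist x w = 0 → x = w := hc.dist_eq_zero_iff.mp
    simp only [Set.mem_insert_iff, Set.mem_singleton_iff, not_or]
    refine ⟨fun h => hab' ?_, fun h => hab' ?_, fun h => hcd' ?_, fun h => hcd' ?_⟩ <;> subst h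
    · exact (hzero (hwa.symm.trans dist_self)).symm
    · exact hzero (hwa.trans dist_self)
    · exact (hzero (hwc.symm.trans dist_self)).symm
    · exact hzero (hwc.trans dist_self)
  have hcard : ({a, b, c, d} : Set V).ncard = 4 :=
    Set.ncard_eq_four.mpr ⟨a, b, c, d, hab', hne w hac, hne w (hwc ▸ hac), hne w (hwa ▸ hac),
      hne w (hwa ▸ hwc ▸ hac), hcd', rfl⟩
  have hD : ∀ x ∈ ({a, b, c, d} : Set V), ∀ y ∈ ({a, b, c, d} : Set V), x ≠ y →
      ∃ u ∉ ({a, b, c, d} : Set V), G.dist x u ≠ G.dist y u := by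
    intro x hx y hy hxy
    simp only [Set.mem_insert_iff, Set.mem_singleton_iff] at hx hy
    rcases hx with rfl | rfl | rfl | rfl <;> rcases hy with rfl | rfl | rfl | rfl <;>
      first
      | exact absurd rfl hxy
      | exact ⟨w₁, hw₁, by omega⟩
      | exact ⟨w₂, hw₂, by omega⟩
      | exact ⟨w, hw, by omega⟩
  have := metricDim_add_ncard_le hc hD
  omega

theorem exists_adj_not_adj_of_not_homogeneous {S : Set V} (h : ¬ Homogeneous G S) :
    ∃ p ∈ S, ∃ q ∈ S, ∃ r ∈ S, p ≠ r ∧ G.Adj p q ∧ ¬ G.Adj p r := by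
  simp only [Homogeneous, not_or, not_forall, not_not, exists_prop] at h
  obtain ⟨⟨c, hc, d, hd, hcd, hncd⟩, a, ha, b, hb, hab⟩ := h
  by_cases hnbr : ∃ q ∈ S, G.Adj c q
  · obtain ⟨q, hq, hcq⟩ := hnbr
    exact ⟨c, hc, q, hq, d, hd, hcd, hcq, hncd⟩
  · simp only [not_exists, not_and] at hnbr
    exact ⟨a, ha, b, hb, c, hc, fun hac => hnbr b hb (hac ▸ hab), hab,
      fun hac => hnbr a ha hac.symm⟩

theorem homogeneous_Gamma_two [Fintype V] (hc : G.Connected) (hd : ∀ a b, G.dist a b ≤ 2)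
    (hβ : metricDim G = Fintype.card V - 3) {v : V} (hΓ : ¬ Homogeneous G (Gamma G 1 v)) :
    Homogeneous G (Gamma G 2 v) := by
  by_contra hΓ₂
  obtain ⟨p, hp, q, hq, r, hr, hpr, hpq, hnpr⟩ := exists_adj_not_adj_of_not_homogeneous hΓ
  obtain ⟨p', hp', q', hq', r', hr', hpr', hpq', hnpr'⟩ :=
    exists_adj_not_adj_of_not_homogeneous hΓ₂
  have hdist : ∀ {x y z : V}, G.Adj x y → x ≠ z → ¬ G.Adj x z → G.dist y x ≠ G.dist z x :=
    fun hxy hxz hnxz => by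
      rw [dist_eq_one_iff_adj.mpr hxy.symm,
        dist_eq_two_of_not_adj hc hd (Ne.symm hxz) fun h => hnxz h.symm]
      decide
  have := metricDim_add_four_le hc (a := q) (b := r) (c := q') (d := r')
    ⟨p, by
      simp only [Set.mem_insert_iff, Set.mem_singleton_iff, not_or]
      exact ⟨hpq.ne, hpr, ne_of_mem_Gamma hp hq' (by decide), ne_of_mem_Gamma hp hr' (by decide)⟩,
      hdist hpq hpr hnpr⟩
    ⟨p', by
      simp only [Set.mem_insert_iff, Set.mem_singleton_iff, not_or]
      exact ⟨ne_of_mem_Gamma hp' hq (by decide), ne_of_mem_Gamma hp' hr (by decide), hpq'.ne,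
        hpr'⟩,
      hdist hpq' hpr' hnpr'⟩
    ⟨v, hq.trans hr.symm, hq'.trans hr'.symm, by rw [mem_Gamma.mp hq, mem_Gamma.mp hq']; decide⟩
  omega

theorem twins_iff {s t : V} :
    Twins G s t ↔ s ≠ t ∧ ∀ z, z ≠ s → z ≠ t → (G.Adj s z ↔ G.Adj t z) := by
  simp only [Twins, Set.ext_iff, Set.mem_sdiff, mem_neighborSet, Set.mem_singleton_iff]
  refine and_congr_right fun hst => ⟨fun h z hzs hzt => by simpa [hzs, hzt] using h z,
    fun h z => ?_⟩
  by_cases hzs : z = s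
  · subst hzs
    simp
  by_cases hzt : z = t
  · subst hzt
    simp
  simp [hzs, hzt, h z hzs hzt]

theorem Twins.symm {s t : V} (h : Twins G s t) : Twins G t s := ⟨h.1.symm, h.2.symm⟩

theorem not_twins_of_adj_of_not_adj {s t z : V} (hs : G.Adj s z) (ht : ¬ G.Adj t z)
    (hzt : z ≠ t) : ¬ Twins G s t :=
  fun h => ht (((twins_iff.mp h).2 z hs.ne' hzt).mp hs)

def IsModule (G : SimpleGraph V) (S : Set V) : Prop :=
  ∀ z ∉ S, ∀ s ∈ S, ∀ t ∈ S, G.Adj s z → G.Adj t z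

theorem Homogeneous.twins_of_isModule {S : Set V} (hS : Homogeneous G S) (hmod : IsModule G S)
    {s t : V} (hs : s ∈ S) (ht : t ∈ S) (hst : s ≠ t) : Twins G s t := by
  refine twins_iff.mpr ⟨hst, fun z hzs hzt => ?_⟩
  by_cases hz : z ∈ S
  · rcases hS with hK | hN
    · exact iff_of_true (hK s hs z hz hzs.symm) (hK t ht z hz hzt.symm)
    · exact iff_of_false (hN s hs z hz) (hN t ht z hz)
  · exact ⟨hmod z hz s hs t ht, hmod z hz t ht s hs⟩

theorem twinClass_eq_of_isModule {S : Set V} (hS : Homogeneous G S) (hmod : IsModule G S)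
    {w : V} (hw : w ∈ S) (hout : ∀ t ∉ S, ¬ Twins G w t) : twinClass G w = S := by
  ext t
  refine ⟨?_, fun ht => ?_⟩
  · rintro (rfl | htw)
    · exact hw
    · by_contra ht
      exact hout t ht htw
  · by_cases hwt : w = t
    · exact Or.inl hwt
    · exact Or.inr (hS.twins_of_isModule hmod hw ht hwt)

theorem mem_cls_self (w : V) : w ∈ (cls G w).1 := Or.inl rfl

theorem TwinVertex.exists_eq_cls (X : TwinVertex G) : ∃ w, X = cls G w := by
  obtain ⟨w, hw⟩ := X.2
  exact ⟨w, Subtype.ext hw⟩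

theorem cls_eq_or_adj_of_adj {a b : V} (h : G.Adj a b) :
    cls G a = cls G b ∨ (twinGraph G).Adj (cls G a) (cls G b) :=
  or_iff_not_imp_left.mpr fun hne => ⟨hne, a, mem_cls_self a, b, mem_cls_self b, h⟩

theorem Gamma_two_nonempty_of_GammaStar (hc : G.Connected) (hd : ∀ a b, G.dist a b ≤ 2)
    {v : V} (h : (GammaStar G 2 v).Nonempty) : (Gamma G 2 v).Nonempty := by
  by_contra hempty
  obtain ⟨X, hX⟩ := h
  obtain ⟨w, rfl⟩ := X.exists_eq_cls
  have hX' : (twinGraph G).dist (cls G w) (cls G v) = 2 := hX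
  have hw : w = v ∨ G.Adj w v := by
    by_contra! h
    exact hempty ⟨w, dist_eq_two_of_not_adj hc hd h.1 h.2⟩
  rcases hw with rfl | hadj
  · simp at hX'
  · rcases cls_eq_or_adj_of_adj hadj with h | h
    · simp [h] at hX'
    · simp [dist_eq_one_iff_adj.mpr h] at hX'

structure IsBlowUpP3 (G : SimpleGraph V) (A B C : Set V) : Prop where
  cover : ∀ t, t ∈ A ∨ t ∈ B ∨ t ∈ C
  left_nontrivial : A.Nontrivial
  center_nontrivial : B.Nontrivial
  right_nonempty : C.Nonempty
  left_complete : ∀ a ∈ A, ∀ a' ∈ A, a ≠ a' → G.Adj a a'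
  center_independent : ∀ b ∈ B, ∀ b' ∈ B, ¬ G.Adj b b'
  right_homogeneous : Homogeneous G C
  adj_left_center : ∀ a ∈ A, ∀ b ∈ B, G.Adj a b
  adj_center_right : ∀ b ∈ B, ∀ c ∈ C, G.Adj b c
  not_adj_left_right : ∀ a ∈ A, ∀ c ∈ C, ¬ G.Adj a c

namespace IsBlowUpP3

variable {A B C : Set V}

theorem not_mem_center_of_mem_left (h : IsBlowUpP3 G A B C) {a : V} (ha : a ∈ A) : a ∉ B :=
  fun hb => by
    obtain ⟨b, hb', -⟩ := h.center_nontrivial.exists_ne a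
    exact h.center_independent a hb b hb' (h.adj_left_center a ha b hb')

theorem not_mem_right_of_mem_left (h : IsBlowUpP3 G A B C) {a : V} (ha : a ∈ A) : a ∉ C :=
  fun hc => by
    obtain ⟨a', ha', hne⟩ := h.left_nontrivial.exists_ne a
    exact h.not_adj_left_right a' ha' a hc (h.left_complete a' ha' a ha hne)

theorem not_mem_right_of_mem_center (h : IsBlowUpP3 G A B C) {b : V} (hb : b ∈ B) : b ∉ C :=
  fun hc => by
    obtain ⟨b', hb', -⟩ := h.center_nontrivial.exists_ne b
    exact h.center_independent b' hb' b hb (h.adj_center_right b' hb' b hc)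

theorem isModule_left (h : IsBlowUpP3 G A B C) : IsModule G A := by
  intro z hz s hs t ht hsz
  rcases h.cover z with hzA | hzB | hzC
  · exact absurd hzA hz
  · exact h.adj_left_center t ht z hzB
  · exact absurd hsz (h.not_adj_left_right s hs z hzC)

theorem isModule_center (h : IsBlowUpP3 G A B C) : IsModule G B := by
  intro z hz s hs t ht _
  rcases h.cover z with hzA | hzB | hzC
  · exact (h.adj_left_center z hzA t ht).symm
  · exact absurd hzB hz
  · exact h.adj_center_right t ht z hzC

theorem isModule_right (h : IsBlowUpP3 G A B C) : IsModule G C := by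
  intro z hz s hs t ht hsz
  rcases h.cover z with hzA | hzB | hzC
  · exact absurd hsz.symm (h.not_adj_left_right z hzA s hs)
  · exact (h.adj_center_right z hzB t ht).symm
  · exact absurd hzC hz

theorem twinClass_left (h : IsBlowUpP3 G A B C) {a : V} (ha : a ∈ A) : twinClass G a = A := by
  refine twinClass_eq_of_isModule (Or.inl h.left_complete) h.isModule_left ha fun t ht => ?_
  rcases h.cover t with htA | htB | htC
  · exact absurd htA ht
  · obtain ⟨c, hc⟩ := h.right_nonempty
    exact fun htw => not_twins_of_adj_of_not_adj (h.adj_center_right t htB c hc)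
      (h.not_adj_left_right a ha c hc) (ne_of_mem_of_not_mem hc (h.not_mem_right_of_mem_left ha))
      htw.symm
  · obtain ⟨a', ha', hne⟩ := h.left_nontrivial.exists_ne a
    exact not_twins_of_adj_of_not_adj (h.left_complete a ha a' ha' hne.symm)
      (fun hadj => h.not_adj_left_right a' ha' t htC hadj.symm) (ne_of_mem_of_not_mem ha' ht)

theorem twinClass_center (h : IsBlowUpP3 G A B C) {b : V} (hb : b ∈ B) :
    twinClass G b = B := by
  refine twinClass_eq_of_isModule (Or.inr h.center_independent) h.isModule_center hb
    fun t ht => ?_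
  rcases h.cover t with htA | htB | htC
  · obtain ⟨c, hc⟩ := h.right_nonempty
    exact not_twins_of_adj_of_not_adj (h.adj_center_right b hb c hc)
      (h.not_adj_left_right t htA c hc) (ne_of_mem_of_not_mem hc (h.not_mem_right_of_mem_left htA))
  · exact absurd htB ht
  · obtain ⟨a, ha⟩ := h.left_nontrivial.nonempty
    exact not_twins_of_adj_of_not_adj (h.adj_left_center a ha b hb).symm
      (fun hadj => h.not_adj_left_right a ha t htC hadj.symm)
      (ne_of_mem_of_not_mem htC (h.not_mem_right_of_mem_left ha)).symm

theorem twinClass_right (h : IsBlowUpP3 G A B C) {c : V} (hc : c ∈ C) :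
    twinClass G c = C := by
  refine twinClass_eq_of_isModule h.right_homogeneous h.isModule_right hc fun t ht => ?_
  rcases h.cover t with htA | htB | htC
  · obtain ⟨a', ha', hne⟩ := h.left_nontrivial.exists_ne t
    exact fun htw => not_twins_of_adj_of_not_adj (h.left_complete t htA a' ha' hne.symm)
      (fun hadj => h.not_adj_left_right a' ha' c hc hadj.symm)
      (ne_of_mem_of_not_mem hc (h.not_mem_right_of_mem_left ha')).symm htw.symm
  · obtain ⟨a, ha⟩ := h.left_nontrivial.nonempty
    exact fun htw => not_twins_of_adj_of_not_adj (h.adj_left_center a ha t htB).symm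
      (fun hadj => h.not_adj_left_right a ha c hc hadj.symm)
      (ne_of_mem_of_not_mem hc (h.not_mem_right_of_mem_left ha)).symm htw.symm
  · exact absurd htC ht

theorem structG2 (h : IsBlowUpP3 G A B C) : structG2 G := by
  obtain ⟨a, ha⟩ := h.left_nontrivial.nonempty
  obtain ⟨b, hb⟩ := h.center_nontrivial.nonempty
  obtain ⟨c, hc⟩ := h.right_nonempty
  have hA : (cls G a).1 = A := h.twinClass_left ha
  have hB : (cls G b).1 = B := h.twinClass_center hb
  have hC : (cls G c).1 = C := h.twinClass_right hc
  have hab : cls G a ≠ cls G b := fun e =>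
    h.not_mem_center_of_mem_left ha (by rw [← hB, ← e]; exact mem_cls_self a)
  have hac : cls G a ≠ cls G c := fun e =>
    h.not_mem_right_of_mem_left ha (by rw [← hC, ← e]; exact mem_cls_self a)
  have hbc : cls G b ≠ cls G c := fun e =>
    h.not_mem_right_of_mem_center hb (by rw [← hC, ← e]; exact mem_cls_self b)
  have hcover : ∀ X : TwinVertex G, X = cls G a ∨ X = cls G b ∨ X = cls G c := by
    intro X
    obtain ⟨w, rfl⟩ := X.exists_eq_cls
    rcases h.cover w with hw | hw | hw
    · exact .inl (Subtype.ext ((h.twinClass_left hw).trans hA.symm))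
    · exact .inr (.inl (Subtype.ext ((h.twinClass_center hw).trans hB.symm)))
    · exact .inr (.inr (Subtype.ext ((h.twinClass_right hw).trans hC.symm)))
  refine ⟨cls G a, cls G b, cls G c, hab, hac, hbc, hcover,
    ⟨hab, a, mem_cls_self a, b, mem_cls_self b, h.adj_left_center a ha b hb⟩,
    ⟨hbc, b, mem_cls_self b, c, mem_cls_self c, h.adj_center_right b hb c hc⟩, ?_,
    .inl ⟨?_, .inl ?_⟩⟩
  · rintro ⟨-, p, hp, q, hq, hpq⟩
    rw [hA] at hp
    rw [hC] at hq
    exact h.not_adj_left_right p hp q hq hpq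
  · rw [typeN, hB]
    exact ⟨h.center_nontrivial, h.center_independent⟩
  · rw [typeK, hA]
    exact ⟨h.left_nontrivial, h.left_complete⟩

end IsBlowUpP3

theorem adj_of_M2_eq_empty (hc : G.Connected) (hd : ∀ a b, G.dist a b ≤ 2) {v u t : V}
    (hu : M2 G v u = ∅) (ht : t ∈ Gamma G 1 v) (htu : t ≠ u) : G.Adj u t := by
  by_contra hnadj
  have hmem : t ∈ M2 G v u := ⟨ht, dist_eq_two_of_not_adj hc hd htu fun h => hnadj h.symm⟩
  rw [hu] at hmem
  exact Set.notMem_empty t hmem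

theorem exists_ne_not_adj_mem_R1 (hc : G.Connected) (hd : ∀ a b, G.dist a b ≤ 2) {v : V}
    (hM : ∀ u ∈ R2 G v, M2 G v u = ∅) (hΓ : ¬ Homogeneous G (Gamma G 1 v)) :
    ∃ x₁ ∈ R1 G v, ∃ x₂ ∈ R1 G v, x₁ ≠ x₂ ∧ ¬ G.Adj x₁ x₂ := by
  have hR1 : ∀ x ∈ Gamma G 1 v, ∀ x' ∈ Gamma G 1 v, x ≠ x' → ¬ G.Adj x x' → x ∈ R1 G v :=
    fun x hx x' hx' hne hnadj => by_contra fun hx₁ =>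
      hnadj (adj_of_M2_eq_empty hc hd (hM x ⟨hx, hx₁⟩) hx' hne.symm)
  simp only [Homogeneous, not_or, not_forall, exists_prop] at hΓ
  obtain ⟨⟨x₁, hx₁, x₂, hx₂, hne, hnadj⟩, -⟩ := hΓ
  exact ⟨x₁, hR1 x₁ hx₁ x₂ hx₂ hne hnadj, x₂, hR1 x₂ hx₂ x₁ hx₁ hne.symm fun h => hnadj h.symm,
    hne, hnadj⟩

theorem R2_nonempty {v : V} (hΓ : ¬ Homogeneous G (Gamma G 1 v))
    (hindep : ∀ a ∈ R1 G v, ∀ b ∈ R1 G v, ¬ G.Adj a b) : (R2 G v).Nonempty := by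
  by_contra hempty
  have hsub : ∀ x ∈ Gamma G 1 v, x ∈ R1 G v := fun x hx => by_contra fun h => hempty ⟨x, hx, h⟩
  exact hΓ (Or.inr fun a ha b hb => hindep a (hsub a ha) b (hsub b hb))

theorem exists_mem_R1_adj {v y : V} (hy : y ∈ Gamma G 2 v) : ∃ x ∈ R1 G v, G.Adj x y := by
  obtain ⟨x, hyx, hxv⟩ := exists_adj_adj_of_dist_eq_two hy
  exact ⟨x, ⟨mem_Gamma_one.mpr hxv, y, hy, hyx.symm⟩, hyx.symm⟩

/-- Otherwise `{v, x, y, y'}` violates `metricDim_add_four_le`, where `x ∈ R₁(v)` is a neighbour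
of `y` and `y' ∈ Γ₂(v)` a neighbour of `x'`: `x'` resolves `v, x` and `y, y'`, while `u` is
adjacent to `v` and `x` but not to `y` and `y'`. -/
theorem adj_of_mem_R1_of_mem_Gamma_two [Fintype V] (hc : G.Connected)
    (hd : ∀ a b, G.dist a b ≤ 2) (hβ : metricDim G = Fintype.card V - 3) {v u x' y : V}
    (hu : u ∈ R2 G v) (hMu : M2 G v u = ∅) (hindep : ∀ a ∈ R1 G v, ∀ b ∈ R1 G v, ¬ G.Adj a b)
    (hx' : x' ∈ R1 G v) (hy : y ∈ Gamma G 2 v) : G.Adj x' y := by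
  by_contra hnadj
  obtain ⟨x, hx, hxy⟩ := exists_mem_R1_adj hy
  obtain ⟨y', hy', hx'y'⟩ := hx'.2
  have hx'v : G.Adj x' v := mem_Gamma_one.mp hx'.1
  have hxx' : x ≠ x' := by
    rintro rfl
    exact hnadj hxy
  have hux : G.Adj u x := adj_of_M2_eq_empty hc hd hMu hx.1 (ne_of_mem_of_not_mem hx hu.2)
  have hdist_u : ∀ z ∈ Gamma G 2 v, G.dist z u = 2 := fun z hz =>
    dist_eq_two_of_not_adj hc hd (ne_of_mem_Gamma hz hu.1 (by decide))
      fun h => hu.2 ⟨hu.1, z, hz, h.symm⟩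
  have hx'D : x' ∉ ({v, x, y, y'} : Set V) := by
    simp only [Set.mem_insert_iff, Set.mem_singleton_iff, not_or]
    exact ⟨hx'v.ne, hxx'.symm, ne_of_mem_Gamma hx'.1 hy (by decide),
      ne_of_mem_Gamma hx'.1 hy' (by decide)⟩
  have := metricDim_add_four_le hc (a := v) (b := x) (c := y) (d := y')
    ⟨x', hx'D, by
      rw [dist_eq_one_iff_adj.mpr hx'v.symm,
        dist_eq_two_of_not_adj hc hd hxx' (hindep x hx x' hx')]
      decide⟩
    ⟨x', hx'D, by
      rw [dist_eq_one_iff_adj.mpr hx'y'.symm,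
        dist_eq_two_of_not_adj hc hd (ne_of_mem_Gamma hy hx'.1 (by decide)) fun h => hnadj h.symm]
      decide⟩
    ⟨u, by rw [dist_eq_one_iff_adj.mpr (mem_Gamma_one.mp hu.1).symm,
        dist_eq_one_iff_adj.mpr hux.symm],
      by rw [hdist_u y hy, hdist_u y' hy'],
      by rw [dist_eq_one_iff_adj.mpr (mem_Gamma_one.mp hu.1).symm, hdist_u y hy]; decide⟩
  omega

theorem isBlowUpP3_of_M2_eq_empty [Fintype V] (hc : G.Connected) (hd : ∀ a b, G.dist a b ≤ 2)
    (hβ : metricDim G = Fintype.card V - 3) {v : V} (hΓ : ¬ Homogeneous G (Gamma G 1 v))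
    (hC : (Gamma G 2 v).Nonempty) (hM : ∀ u ∈ R2 G v, M2 G v u = ∅)
    (hR1 : Homogeneous G (R1 G v)) :
    IsBlowUpP3 G (insert v (R2 G v)) (R1 G v) (Gamma G 2 v) := by
  obtain ⟨x₁, hx₁, x₂, hx₂, hne, hnadj⟩ := exists_ne_not_adj_mem_R1 hc hd hM hΓ
  have hindep : ∀ a ∈ R1 G v, ∀ b ∈ R1 G v, ¬ G.Adj a b :=
    hR1.resolve_left fun hK => hnadj (hK x₁ hx₁ x₂ hx₂ hne)
  obtain ⟨u, hu⟩ := R2_nonempty hΓ hindep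
  have hR2adj : ∀ a ∈ R2 G v, ∀ t ∈ Gamma G 1 v, t ≠ a → G.Adj a t :=
    fun a ha t ht hta => adj_of_M2_eq_empty hc hd (hM a ha) ht hta
  refine ⟨fun t => ?_, ⟨v, .inl rfl, u, .inr hu, (mem_Gamma_one.mp hu.1).ne'⟩,
    ⟨x₁, hx₁, x₂, hx₂, hne⟩, hC, ?_, hindep, homogeneous_Gamma_two hc hd hβ hΓ, ?_,
    fun b hb c hc' => adj_of_mem_R1_of_mem_Gamma_two hc hd hβ hu (hM u hu) hindep hb hc', ?_⟩
  · have : G.dist t v = 0 ∨ G.dist t v = 1 ∨ G.dist t v = 2 := by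
      have := hd t v
      omega
    rcases this with h0 | h1 | h2
    · exact .inl (.inl (hc.dist_eq_zero_iff.mp h0))
    · by_cases ht : t ∈ R1 G v
      · exact .inr (.inl ht)
      · exact .inl (.inr ⟨h1, ht⟩)
    · exact .inr (.inr h2)
  · rintro a (rfl | ha) a' (rfl | ha') hne
    · exact absurd rfl hne
    · exact (mem_Gamma_one.mp ha'.1).symm
    · exact mem_Gamma_one.mp ha.1
    · exact hR2adj a ha a' ha'.1 hne.symm
  · rintro a (rfl | ha) b hb
    · exact (mem_Gamma_one.mp hb.1).symm
    · exact hR2adj a ha b hb.1 (ne_of_mem_of_not_mem hb ha.2)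
  · rintro a (rfl | ha) c hc'
    · exact fun h => ((mem_Gamma_two hc hd).mp hc').2 h.symm
    · exact fun h => ha.2 ⟨ha.1, c, hc', h⟩

end

/-- Suppose `G` is connected of order `n`, `diam(G) = 2`, `β(G) = n - 3`, for
every vertex `w` with `Γ_2^*(w^*) ≠ ∅` the set `Γ_1(w)` is not homogeneous, and
`v` is a vertex with `Γ_2^*(v^*) ≠ ∅`. If `M_2(u) = ∅` for every `u ∈ R_2(v)`
and `R_1(v)` is homogeneous, then the twin graph satisfies the structure `G_2`. -/
theorem structure_G2_of_M2_empty_R1_homogeneous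
    {V : Type*} [Fintype V] (G : SimpleGraph V)
    (hdiam : diamEq G 2)
    (hbeta : metricDim G = Fintype.card V - 3)
    (hall : ∀ w : V, (GammaStar G 2 w).Nonempty → ¬ Homogeneous G (Gamma G 1 w))
    (v : V) (h2 : (GammaStar G 2 v).Nonempty)
    (hM : ∀ u ∈ R2 G v, M2 G v u = ∅)
    (hR1 : Homogeneous G (R1 G v)) :
    structG2 G := by
  obtain ⟨hc, hd, -⟩ := hdiam
  exact (isBlowUpP3_of_M2_eq_empty hc hd hbeta (hall v h2)
    (Gamma_two_nonempty_of_GammaStar hc hd h2) hM hR1).structG2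

end PaperMetricDim
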